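/- For every integer n ≥ 1 and every x, q_n(x) = Σ_{k=0}^{n} (−2)^{n−k} · k! · (Σ_{i=k}^{n} C(n,i) · 2^i · S(i,k)) · (x+1)^k, where C(n,i) denotes the binomial coefficient and S(i,k) is the Stirling number of the second kind (so that k!·S(i,k) equals the number of surjective functions from an i-element set onto a k-element set). -/

import Mathlib

open Polynomial Finset

/-- The alternating derivative polynomials for tangent: `p 0 = X`,
`p (n+1) = (X^2 - 1) * (p n)'`. -/
noncomputable def p : ℕ → Polynomial ℝ
  | 0 => X
  | n + 1 => (X ^ 2 - 1) * derivative (p n)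

/-- The alternating derivative polynomials for secant: `q 0 = 1`,
`q (n+1) = 2(X^2 - 1) * (q n)' + 2X * q n`. -/
noncomputable def q : ℕ → Polynomial ℝ
  | 0 => 1
  | n + 1 => 2 * (X ^ 2 - 1) * derivative (q n) + 2 * X * q n

/-- The Stirling number of the second kind `S(n,k)`, defined so that
`k! * S(n,k)` is the number of surjections from `Fin n` onto `Fin k`. -/
noncomputable def stirling2 (n k : ℕ) : ℝ :=
  (Fintype.card {f : Fin n → Fin k // Function.Surjective f} : ℝ) / (k.factorial : ℝ)

/-!
Write `Δ` for the forward difference with step `1`. Inclusion–exclusion gives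
`k! S(i,k) = Δᵏ tⁱ |_{t=0}`, so by the binomial theorem the inner sum of the theorem, multiplied
by `k!`, is `T(n,k) = Δᵏ (2t+1)ⁿ |_{t=0}` (`oddPowFwdDiff n k`). The Leibniz rule
`Δᵏ⁺¹ (t f) = (t + k + 1) Δᵏ⁺¹ f + (k + 1) Δᵏ f` gives
`T(n+1,k+1) = (2k+3) T(n,k+1) + 2(k+1) T(n,k)`. On the other side, `rₙ(y) = qₙ(y - 1)` satisfies
`rₙ₊₁ = 2y(y-2) rₙ' + 2(y-1) rₙ`, and comparing coefficients shows that `(-2)ᵏ [yᵏ] rₙ` and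
`(-2)ⁿ T(n,k)` obey the same recurrence.
-/

open scoped fwdDiff

section FwdDiff

variable {R : Type*} [CommRing R]

theorem fwdDiff_iter_succ_apply_eq_sub (f : R → R) (k : ℕ) (y : R) :
    Δ_[1] ^[k + 1] f y = Δ_[1] ^[k] f (y + 1) - Δ_[1] ^[k] f y := by
  rw [Function.iterate_succ_apply', fwdDiff]

theorem fwdDiff_iter_succ_id_mul (f : R → R) (k : ℕ) (y : R) :
    Δ_[1] ^[k + 1] (fun t ↦ t * f t) y =
      (y + (k + 1)) * Δ_[1] ^[k + 1] f y + (k + 1) * Δ_[1] ^[k] f y := by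
  induction k generalizing y with
  | zero =>
    simp only [fwdDiff_iter_succ_apply_eq_sub, Function.iterate_zero_apply, Nat.cast_zero]
    ring
  | succ k ih =>
    rw [fwdDiff_iter_succ_apply_eq_sub, ih, ih]
    push_cast
    linear_combination (-(y + k + 2)) * fwdDiff_iter_succ_apply_eq_sub f (k + 1) y
      + (-(k + 1 : R)) * fwdDiff_iter_succ_apply_eq_sub f k y

theorem fwdDiff_iter_succ_mul_add_one_pow_succ (a : R) (n k : ℕ) (y : R) :
    Δ_[1] ^[k + 1] (fun t ↦ (a * t + 1) ^ (n + 1)) y =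
      (a * (y + k + 1) + 1) * Δ_[1] ^[k + 1] (fun t ↦ (a * t + 1) ^ n) y +
        a * (k + 1) * Δ_[1] ^[k] (fun t ↦ (a * t + 1) ^ n) y := by
  have h_split : (fun t ↦ (a * t + 1) ^ (n + 1)) =
      a • (fun t ↦ t * (a * t + 1) ^ n) + fun t ↦ (a * t + 1) ^ n := by
    ext t
    simp only [Pi.add_apply, Pi.smul_apply, smul_eq_mul]
    ring
  rw [h_split, fwdDiff_iter_add, fwdDiff_iter_const_smul, Pi.add_apply, Pi.smul_apply,
    smul_eq_mul, fwdDiff_iter_succ_id_mul]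
  ring

theorem fwdDiff_iter_mul_add_one_pow (a : R) (n k : ℕ) (y : R) :
    Δ_[1] ^[k] (fun t ↦ (a * t + 1) ^ n) y =
      ∑ i ∈ range (n + 1), (n.choose i : R) * a ^ i * Δ_[1] ^[k] (fun t ↦ t ^ i) y := by
  have h_binom : (fun t ↦ (a * t + 1) ^ n) =
      ∑ i ∈ range (n + 1), ((n.choose i : R) * a ^ i) • fun t ↦ t ^ i := by
    ext t
    simp only [add_pow, one_pow, mul_one, Finset.sum_apply, Pi.smul_apply, smul_eq_mul, mul_pow]
    exact sum_congr rfl fun i _ ↦ by ring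
  simp only [h_binom, fwdDiff_iter_finsetSum, fwdDiff_iter_const_smul, Finset.sum_apply,
    Pi.smul_apply, smul_eq_mul]

theorem card_surjective_eq_fwdDiff_iter_pow (α β : Type*) [Fintype α] [DecidableEq α]
    [Fintype β] [DecidableEq β] :
    (Fintype.card {f : α → β // Function.Surjective f} : R) =
      Δ_[1] ^[Fintype.card β] (fun t : R ↦ t ^ Fintype.card α) 0 := by
  let missing : β → Finset (α → β) := fun y ↦ {f | ∀ x, f x ≠ y}
  have h_surj : (univ.inf fun y ↦ (missing y)ᶜ) = ({f | Function.Surjective f} : Finset _) := by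
    ext f
    simp only [mem_filter, mem_univ, true_and, Finset.mem_inf, mem_compl, missing]
    simp [Function.Surjective]
  have h_avoid (t : Finset β) :
      #(t.inf missing) = (Fintype.card β - #t) ^ Fintype.card α := by
    have : t.inf missing = Fintype.piFinset fun _ ↦ tᶜ := by
      ext f
      simp only [Finset.mem_inf, missing, mem_filter, mem_univ, true_and,
        Fintype.mem_piFinset, mem_compl]
      exact ⟨fun h x hx ↦ h _ hx x rfl, fun h y hy x hx ↦ h x (hx ▸ hy)⟩
    simp [this, card_compl]
  have h_incl := congrArg (Int.cast : ℤ → R) (inclusion_exclusion_card_inf_compl univ missing)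
  push_cast at h_incl
  rw [Fintype.card_subtype, ← h_surj, fwdDiff_iter_eq_sum_shift, h_incl]
  simp only [h_avoid]
  rw [sum_powerset_apply_card (fun m ↦ (-1 : R) ^ m * ((Fintype.card β - m) ^ Fintype.card α : ℕ)),
    card_univ, ← sum_range_reflect]
  refine sum_congr rfl fun m hm ↦ ?_
  have hm : m ≤ Fintype.card β := Nat.lt_succ_iff.mp (mem_range.mp hm)
  simp [Nat.sub_sub_self hm, Nat.choose_symm hm]
  ring

end FwdDiff

noncomputable def oddPowFwdDiff (n k : ℕ) : ℝ :=
  Δ_[1] ^[k] (fun t : ℝ ↦ (2 * t + 1) ^ n) 0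

theorem oddPowFwdDiff_eq_sum (n k : ℕ) :
    oddPowFwdDiff n k =
      ∑ i ∈ range (n + 1), (n.choose i : ℝ) * 2 ^ i * Δ_[1] ^[k] (fun t : ℝ ↦ t ^ i) 0 :=
  fwdDiff_iter_mul_add_one_pow 2 n k 0

theorem oddPowFwdDiff_eq_zero_of_lt {n k : ℕ} (h : n < k) : oddPowFwdDiff n k = 0 := by
  rw [oddPowFwdDiff_eq_sum]
  refine sum_eq_zero fun i hi ↦ ?_
  rw [fwdDiff_iter_pow_eq_zero_of_lt (by have := mem_range.mp hi; omega), Pi.zero_apply, mul_zero]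

theorem oddPowFwdDiff_succ_zero (n : ℕ) : oddPowFwdDiff (n + 1) 0 = oddPowFwdDiff n 0 := by
  simp [oddPowFwdDiff]

theorem oddPowFwdDiff_succ_succ (n k : ℕ) :
    oddPowFwdDiff (n + 1) (k + 1) =
      (2 * k + 3) * oddPowFwdDiff n (k + 1) + 2 * (k + 1) * oddPowFwdDiff n k := by
  rw [oddPowFwdDiff, fwdDiff_iter_succ_mul_add_one_pow_succ]
  simp only [oddPowFwdDiff]
  ring

theorem factorial_mul_stirling2 (i k : ℕ) :
    (k.factorial : ℝ) * stirling2 i k = Δ_[1] ^[k] (fun t : ℝ ↦ t ^ i) 0 := by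
  rw [stirling2, mul_div_cancel₀ _ (by positivity), card_surjective_eq_fwdDiff_iter_pow,
    Fintype.card_fin, Fintype.card_fin]

theorem factorial_mul_sum_choose_mul_stirling2 (n k : ℕ) :
    (k.factorial : ℝ) * ∑ i ∈ Icc k n, (n.choose i : ℝ) * 2 ^ i * stirling2 i k =
      oddPowFwdDiff n k := by
  have h_sub : Icc k n ⊆ range (n + 1) := fun i hi ↦
    mem_range.mpr (Nat.lt_succ_of_le (mem_Icc.mp hi).2)
  rw [oddPowFwdDiff_eq_sum, mul_sum, ← sum_subset h_sub]
  · refine sum_congr rfl fun i _ ↦ ?_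
    rw [← factorial_mul_stirling2]
    ring
  · intro i hi_range hi_Icc
    have : i < k := by
      simp only [mem_range, mem_Icc, not_and, not_le] at hi_range hi_Icc
      omega
    rw [fwdDiff_iter_pow_eq_zero_of_lt this, Pi.zero_apply, mul_zero]

section CoeffStep

variable {R : Type*} [CommRing R]

theorem coeff_X_mul_derivative (p : R[X]) (k : ℕ) :
    (X * derivative p).coeff k = k * p.coeff k := by
  cases k with
  | zero => simp
  | succ k => rw [coeff_X_mul, coeff_derivative]; push_cast; ring

theorem coeff_zero_shifted_q_step (p : R[X]) :
    (2 * X * (X - 2) * derivative p + 2 * (X - 1) * p).coeff 0 = -2 * p.coeff 0 := by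
  have : 2 * X * (X - 2) * derivative p + 2 * (X - 1) * p =
      X * (2 * (X * derivative p) + 2 * p) - 4 * (X * derivative p) - 2 * p := by ring
  rw [this]
  simp only [coeff_sub, coeff_X_mul_zero, coeff_ofNat_mul]
  ring

theorem coeff_succ_shifted_q_step (p : R[X]) (k : ℕ) :
    (2 * X * (X - 2) * derivative p + 2 * (X - 1) * p).coeff (k + 1) =
      2 * (k + 1) * p.coeff k - (4 * k + 6) * p.coeff (k + 1) := by
  have : 2 * X * (X - 2) * derivative p + 2 * (X - 1) * p =
      X * (2 * (X * derivative p) + 2 * p) - 4 * (X * derivative p) - 2 * p := by ring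
  rw [this, coeff_sub, coeff_sub, coeff_X_mul, coeff_add, coeff_ofNat_mul, coeff_ofNat_mul,
    coeff_ofNat_mul, coeff_ofNat_mul, coeff_X_mul_derivative, coeff_X_mul_derivative]
  push_cast
  ring

end CoeffStep

theorem q_succ_comp_X_sub_one (n : ℕ) :
    (q (n + 1)).comp (X - 1) =
      2 * X * (X - 2) * derivative ((q n).comp (X - 1)) + 2 * (X - 1) * (q n).comp (X - 1) := by
  simp only [q, add_comp, mul_comp, sub_comp, pow_comp, X_comp, one_comp, ofNat_comp,
    derivative_comp, derivative_sub, derivative_X, derivative_one]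
  ring

theorem neg_two_pow_mul_coeff_q_comp_X_sub_one (n k : ℕ) :
    (-2) ^ k * ((q n).comp (X - 1)).coeff k = (-2) ^ n * oddPowFwdDiff n k := by
  induction n generalizing k with
  | zero =>
    cases k with
    | zero => simp [q, oddPowFwdDiff]
    | succ k => simp [q, coeff_one, oddPowFwdDiff_eq_zero_of_lt (Nat.succ_pos k)]
  | succ n ih =>
    rw [q_succ_comp_X_sub_one]
    cases k with
    | zero =>
      rw [coeff_zero_shifted_q_step, oddPowFwdDiff_succ_zero]
      linear_combination (-2) * ih 0
    | succ k =>
      rw [coeff_succ_shifted_q_step, oddPowFwdDiff_succ_succ]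
      linear_combination (-4 * (k + 1) : ℝ) * ih k - (4 * k + 6 : ℝ) * ih (k + 1)

theorem coeff_q_comp_X_sub_one {n k : ℕ} (hk : k ≤ n) :
    ((q n).comp (X - 1)).coeff k = (-2) ^ (n - k) * oddPowFwdDiff n k := by
  obtain ⟨m, rfl⟩ := Nat.exists_eq_add_of_le hk
  refine mul_left_cancel₀ (pow_ne_zero k (by norm_num : (-2 : ℝ) ≠ 0)) ?_
  rw [neg_two_pow_mul_coeff_q_comp_X_sub_one, Nat.add_sub_cancel_left, pow_add]
  ring

theorem natDegree_q_comp_X_sub_one_le (n : ℕ) : ((q n).comp (X - 1)).natDegree ≤ n := by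
  refine natDegree_le_iff_coeff_eq_zero.mpr fun k hk ↦ ?_
  have h := neg_two_pow_mul_coeff_q_comp_X_sub_one n k
  rw [oddPowFwdDiff_eq_zero_of_lt hk, mul_zero] at h
  exact (mul_eq_zero.mp h).resolve_left (pow_ne_zero _ (by norm_num))

theorem q_eq_sum_stirling_general (n : ℕ) (x : ℝ) :
    (q n).eval x =
      ∑ k ∈ Finset.range (n + 1),
        (-2 : ℝ) ^ (n - k) * (k.factorial : ℝ) *
          (∑ i ∈ Finset.Icc k n, (n.choose i : ℝ) * 2 ^ i * stirling2 i k) * (x + 1) ^ k := by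
  have h_shift : (q n).eval x = ((q n).comp (X - 1)).eval (x + 1) := by simp [eval_comp]
  rw [h_shift, eval_eq_sum_range' (Nat.lt_succ_of_le (natDegree_q_comp_X_sub_one_le n))]
  refine sum_congr rfl fun k hk ↦ ?_
  rw [mul_assoc _ (k.factorial : ℝ), factorial_mul_sum_choose_mul_stirling2,
    coeff_q_comp_X_sub_one (Nat.lt_succ_iff.mp (mem_range.mp hk))]

theorem q_eq_sum_stirling (n : ℕ) (hn : 1 ≤ n) (x : ℝ) :
    (q n).eval x =
      ∑ k ∈ Finset.range (n + 1),
        (-2 : ℝ) ^ (n - k) * (k.factorial : ℝ) *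
          (∑ i ∈ Finset.Icc k n, (n.choose i : ℝ) * 2 ^ i * stirling2 i k) * (x + 1) ^ k :=
  q_eq_sum_stirling_general n x
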